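/- arXiv:1807.10902 — 2 statements merged into one kernel-verified Lean document; each statement's English description precedes it below -/
import Mathlib

section
/- (Prediction-loss bound for the lasso.) Let R_n, R̄ : ℝ^p → ℝ, λ ≥ 0, λ₀ ≥ 0, θ* ∈ ℝ^p, and define L(θ) = R̄(θ) − R̄(θ*) and G(θ) = R_n(θ) − R̄(θ). Suppose θ̂ ∈ ℝ^p satisfies R_n(θ̂) + λ‖θ̂‖₁ ≤ R_n(θ*) + λ‖θ*‖₁, that the increment bound |G(θ̂) − G(θ*)| ≤ λ₀ holds, and that λ₀ ≤ λ‖θ*‖₁. Then L(θ̂) + λ‖θ̂‖₁ ≤ 2λ‖θ*‖₁. -/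
theorem prediction_loss_bound_general (p : ℕ) (Rn Rbar : (Fin p → ℝ) → ℝ) (lam lam0 : ℝ)
    (θstar θhat : Fin p → ℝ)
    (hmin : Rn θhat + lam * ∑ j, |θhat j| ≤ Rn θstar + lam * ∑ j, |θstar j|)
    (hG : |(Rn θhat - Rbar θhat) - (Rn θstar - Rbar θstar)| ≤ lam0)
    (hl : lam0 ≤ lam * ∑ j, |θstar j|) :
    (Rbar θhat - Rbar θstar) + lam * ∑ j, |θhat j| ≤ 2 * lam * ∑ j, |θstar j| := by
  have hincr := neg_le_of_abs_le hG
  calc (Rbar θhat - Rbar θstar) + lam * ∑ j, |θhat j|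
      = (Rn θhat + lam * ∑ j, |θhat j| - Rn θstar)
          - ((Rn θhat - Rbar θhat) - (Rn θstar - Rbar θstar)) := by ring
    _ ≤ lam * ∑ j, |θstar j| + lam0 := by linarith
    _ ≤ 2 * lam * ∑ j, |θstar j| := by linarith

/-- Prediction-loss bound for the lasso: under the basic inequality, the increment bound
`|G(θ̂) - G(θ*)| ≤ λ₀` and `λ₀ ≤ λ‖θ*‖₁`, the prediction loss plus penalty is at most
`2λ‖θ*‖₁`. -/
theorem prediction_loss_bound (p : ℕ) (Rn Rbar : (Fin p → ℝ) → ℝ) (lam lam0 : ℝ)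
    (hlam : 0 ≤ lam) (hlam0 : 0 ≤ lam0) (θstar θhat : Fin p → ℝ)
    (hmin : Rn θhat + lam * ∑ j, |θhat j| ≤ Rn θstar + lam * ∑ j, |θstar j|)
    (hG : |(Rn θhat - Rbar θhat) - (Rn θstar - Rbar θstar)| ≤ lam0)
    (hl : lam0 ≤ lam * ∑ j, |θstar j|) :
    (Rbar θhat - Rbar θstar) + lam * ∑ j, |θhat j| ≤ 2 * lam * ∑ j, |θstar j| :=
  prediction_loss_bound_general p Rn Rbar lam lam0 θstar θhat hmin hG hl
end

section
/- (Cone condition for the lasso error.) Let R_n, R̄ : ℝ^p → ℝ with R̄(θ) ≥ R̄(θ*) for all θ (θ* minimizes R̄), let λ > 0, λ₀ ≥ 0, and let S₀ ⊆ {1,…,p} be such that θ*_j = 0 for all j ∉ S₀. Suppose θ̂ satisfies R_n(θ̂) + λ‖θ̂‖₁ ≤ R_n(θ*) + λ‖θ*‖₁ and that |(R_n(θ̂) − R̄(θ̂)) − (R_n(θ*) − R̄(θ*))| ≤ λ₀. Then, writing δ = θ̂ − θ*, the error satisfies ‖δ_{S₀ᶜ}‖₁ ≤ ‖δ_{S₀}‖₁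 + λ₀/λ; in particular, if λ₀ = 0 then ‖δ_{S₀ᶜ}‖₁ ≤ ‖δ_{S₀}‖₁, i.e. δ lies in the cone C₁. -/
/-!
Comparing the penalized empirical risks at `θ̂` and `θ*`, the deviation bound `λ₀` and the
minimality of `θ*` for `R̄` give `λ ‖θ̂‖₁ ≤ λ ‖θ*‖₁ + λ₀`. Since `θ*` vanishes off `S₀`,
the triangle inequality on `S₀` gives `‖θ̂‖₁ - ‖θ*‖₁ ≥ ‖δ_{S₀ᶜ}‖₁ - ‖δ_{S₀}‖₁`; dividing by `λ`
yields the cone condition.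
-/

open Finset

theorem mul_penalty_le_of_excess_risk_le {E : Type*} (Rn Rbar pen : E → ℝ) {θstar θhat : E}
    {lam lam0 : ℝ} (hstar : Rbar θstar ≤ Rbar θhat)
    (hmin : Rn θhat + lam * pen θhat ≤ Rn θstar + lam * pen θstar)
    (hG : |(Rn θhat - Rbar θhat) - (Rn θstar - Rbar θstar)| ≤ lam0) :
    lam * pen θhat ≤ lam * pen θstar + lam0 := by
  linarith [neg_le_of_abs_le hG]

theorem sum_abs_sub_compl_sub_sum_abs_sub_le {ι : Type*} [Fintype ι] [DecidableEq ι]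
    (S : Finset ι) (x : ι → ℝ) {y : ι → ℝ} (hy : ∀ j ∉ S, y j = 0) :
    ∑ j ∈ Sᶜ, |x j - y j| - ∑ j ∈ S, |x j - y j| ≤ ∑ j, |x j| - ∑ j, |y j| := by
  have hy_compl : ∑ j ∈ Sᶜ, |y j| = 0 :=
    sum_eq_zero fun j hj => by rw [hy j (mem_compl.1 hj), abs_zero]
  have hdiff_compl : ∑ j ∈ Sᶜ, |x j - y j| = ∑ j ∈ Sᶜ, |x j| :=
    sum_congr rfl fun j hj => by rw [hy j (mem_compl.1 hj), sub_zero]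
  have htriangle : ∑ j ∈ S, |y j| - ∑ j ∈ S, |x j| ≤ ∑ j ∈ S, |x j - y j| := by
    rw [← sum_sub_distrib]
    exact sum_le_sum fun j _ => abs_sub_comm (x j) (y j) ▸ abs_sub_abs_le_abs_sub (y j) (x j)
  rw [← sum_add_sum_compl S fun j => |x j|, ← sum_add_sum_compl S fun j => |y j|]
  linarith

theorem cone_condition_general (p : ℕ) (Rn Rbar : (Fin p → ℝ) → ℝ) (θstar : Fin p → ℝ)
    (hstar : ∀ θ, Rbar θstar ≤ Rbar θ) (lam lam0 : ℝ) (hlam : 0 < lam)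
    (S0 : Finset (Fin p)) (hsupp : ∀ j ∉ S0, θstar j = 0) (θhat : Fin p → ℝ)
    (hmin : Rn θhat + lam * ∑ j, |θhat j| ≤ Rn θstar + lam * ∑ j, |θstar j|)
    (hG : |(Rn θhat - Rbar θhat) - (Rn θstar - Rbar θstar)| ≤ lam0) :
    (∑ j ∈ S0ᶜ, |θhat j - θstar j| ≤ (∑ j ∈ S0, |θhat j - θstar j|) + lam0 / lam) ∧
    (lam0 = 0 → ∑ j ∈ S0ᶜ, |θhat j - θstar j| ≤ ∑ j ∈ S0, |θhat j - θstar j|) := by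
  have hpenalty := mul_penalty_le_of_excess_risk_le Rn Rbar (fun θ => ∑ j, |θ j|)
    (hstar θhat) hmin hG
  have hsplit := sum_abs_sub_compl_sub_sum_abs_sub_le S0 θhat hsupp
  have hcone : ∑ j ∈ S0ᶜ, |θhat j - θstar j| - ∑ j ∈ S0, |θhat j - θstar j| ≤ lam0 / lam := by
    rw [le_div_iff₀ hlam]
    linarith [mul_le_mul_of_nonneg_right hsplit hlam.le]
  exact ⟨by linarith, fun h0 => by simpa [h0] using hcone⟩

/-- Cone condition for the lasso error: writing `δ = θ̂ - θ*`, the error satisfies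
`‖δ_{S₀ᶜ}‖₁ ≤ ‖δ_{S₀}‖₁ + λ₀/λ`; in particular if `λ₀ = 0` then `δ` lies in the cone `C₁`. -/
theorem cone_condition (p : ℕ) (Rn Rbar : (Fin p → ℝ) → ℝ) (θstar : Fin p → ℝ)
    (hstar : ∀ θ, Rbar θstar ≤ Rbar θ) (lam lam0 : ℝ) (hlam : 0 < lam) (hlam0 : 0 ≤ lam0)
    (S0 : Finset (Fin p)) (hsupp : ∀ j ∉ S0, θstar j = 0) (θhat : Fin p → ℝ)
    (hmin : Rn θhat + lam * ∑ j, |θhat j| ≤ Rn θstar + lam * ∑ j, |θstar j|)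
    (hG : |(Rn θhat - Rbar θhat) - (Rn θstar - Rbar θstar)| ≤ lam0) :
    (∑ j ∈ S0ᶜ, |θhat j - θstar j| ≤ (∑ j ∈ S0, |θhat j - θstar j|) + lam0 / lam) ∧
    (lam0 = 0 → ∑ j ∈ S0ᶜ, |θhat j - θstar j| ≤ ∑ j ∈ S0, |θhat j - θstar j|) :=
  cone_condition_general p Rn Rbar θstar hstar lam lam0 hlam S0 hsupp θhat hmin hG
end
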